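/- arXiv:1909.01599 — 3 statements merged into one kernel-verified Lean document; each statement's English description precedes it below -/
import Mathlib

section
/- A submodular flow instance ((U,A), b̲, b̄, ρ) has a feasible flow if and only if κ(X) ≤ ρ(X) holds for all X ⊆ U. In such a case, if b̲, b̄ and ρ are all integer-valued (wherever finite), there exists an integral feasible flow. -/
open Finset

/-- A submodular function with values in `ℝ ∪ {+∞}` (modeled as `EReal` values never `⊥`):
`ρ ∅ = 0` and the submodularity inequality. -/
def Submodular {U : Type*} [DecidableEq U] (ρ : Finset U → EReal) : Prop :=
  ρ ∅ = 0 ∧ ∀ X Y : Finset U, ρ (X ∩ Y) + ρ (X ∪ Y) ≤ ρ X + ρ Y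

/-- Membership in the base polyhedron `B(ρ)` of a submodular function `ρ`. -/
def InBase {U : Type*} [Fintype U] (ρ : Finset U → EReal) (x : U → ℝ) : Prop :=
  ((∑ i, x i : ℝ) : EReal) = ρ univ ∧
    ∀ X : Finset U, ((∑ i ∈ X, x i : ℝ) : EReal) ≤ ρ X

/-- Boundary of a flow `φ` on a directed graph given by `tail`/`head` maps
(parallel arcs allowed). -/
def SFBoundary {U A : Type*} [Fintype A] [DecidableEq U]
    (tail head : A → U) (φ : A → ℝ) (u : U) : ℝ :=
  ∑ a ∈ univ.filter (fun a => tail a = u), φ a -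
    ∑ a ∈ univ.filter (fun a => head a = u), φ a

/-- Feasibility of a flow for the submodular flow instance. -/
def SFFeasible {U A : Type*} [Fintype U] [Fintype A] [DecidableEq U]
    (tail head : A → U) (blow bup : A → EReal) (ρ : Finset U → EReal)
    (φ : A → ℝ) : Prop :=
  InBase ρ (SFBoundary tail head φ) ∧
    ∀ a, blow a ≤ ((φ a : ℝ) : EReal) ∧ ((φ a : ℝ) : EReal) ≤ bup a

/-- The cut function `κ` of the submodular flow instance. -/
noncomputable def SFCut {U A : Type*} [Fintype A] [DecidableEq U]
    (tail head : A → U) (blow bup : A → EReal) (X : Finset U) : EReal :=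
  (∑ a ∈ univ.filter (fun a => tail a ∈ X ∧ head a ∉ X), blow a) -
    (∑ a ∈ univ.filter (fun a => tail a ∉ X ∧ head a ∈ X), bup a)

/-!
Induction on the number of arcs. Deleting an arc `a = ij` with capacities `[l, u]` and replacing
`ρ` by `ρ - κₐ`, where `κₐ` is the cut function of `a` alone, keeps `ρ` submodular (this uses
`l ≤ u`) and turns the cut condition into that of the smaller instance. If `φ'` is feasible there,
`x = ∇φ'` lies in `B(ρ - κₐ)`, and the admissible values `t` for `a` are cut out by the bounds
`l ≤ t ≤ u`, `x(X) - ρ(X) ≤ t` for the sets `X` that `a` enters and `t ≤ ρ(Y) - x(Y)` for the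
sets `Y` that `a` leaves. These bounds are compatible because `X ∩ Y` and `X ∪ Y` are not
separated by `a`, so submodularity gives `x(X) + x(Y) ≤ ρ(X) + ρ(Y)`. Taking for `t` the largest
lower bound (or the smallest upper bound), `t` lies in every additive subgroup of `ℝ` containing
the finite data, which yields integrality. With no arcs left the cut condition says `0 ≤ ρ`,
i.e. `0 ∈ B(ρ)`.
-/

def ERealIn (S : AddSubgroup ℝ) (x : EReal) : Prop :=
  ∀ r : ℝ, (r : EReal) = x → r ∈ S

namespace ERealIn

variable {S : AddSubgroup ℝ} {x y : EReal}

lemma bot : ERealIn S ⊥ := fun r h => absurd h (EReal.coe_ne_bot r)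

lemma top : ERealIn S ⊤ := fun r h => absurd h (EReal.coe_ne_top r)

lemma coe {r : ℝ} (hr : r ∈ S) : ERealIn S r := fun _ h => EReal.coe_injective h ▸ hr

lemma add (hx : ERealIn S x) (hy : ERealIn S y) : ERealIn S (x + y) := by
  induction x <;> induction y <;> intro r hr <;> try simp at hr
  rw [← EReal.coe_add, EReal.coe_eq_coe_iff] at hr
  exact hr ▸ add_mem (hx _ rfl) (hy _ rfl)

lemma neg (hx : ERealIn S x) : ERealIn S (-x) := by
  induction x <;> intro r hr <;> try simp at hr
  rw [← EReal.coe_neg, EReal.coe_eq_coe_iff] at hr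
  exact hr ▸ neg_mem (hx _ rfl)

lemma sub (hx : ERealIn S x) (hy : ERealIn S y) : ERealIn S (x - y) := hx.add hy.neg

lemma ite {p : Prop} [Decidable p] (hx : ERealIn S x) (hy : ERealIn S y) :
    ERealIn S (if p then x else y) := by
  split_ifs <;> assumption

lemma sup (hx : ERealIn S x) (hy : ERealIn S y) : ERealIn S (x ⊔ y) := by
  rcases max_choice x y with h | h <;> rw [h] <;> assumption

lemma inf (hx : ERealIn S x) (hy : ERealIn S y) : ERealIn S (x ⊓ y) := by
  rcases min_choice x y with h | h <;> rw [h] <;> assumption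

lemma finset_sup {ι : Type*} {s : Finset ι} {f : ι → EReal} (h : ∀ i ∈ s, ERealIn S (f i)) :
    ERealIn S (s.sup f) :=
  Finset.sup_induction bot (fun _ h₁ _ h₂ => h₁.sup h₂) h

lemma finset_inf {ι : Type*} {s : Finset ι} {f : ι → EReal} (h : ∀ i ∈ s, ERealIn S (f i)) :
    ERealIn S (s.inf f) :=
  Finset.inf_induction top (fun _ h₁ _ h₂ => h₁.inf h₂) h

lemma exists_mem_between {m M : EReal} (hmM : m ≤ M) (hm : m ≠ ⊤) (hM : M ≠ ⊥)
    (hmS : ERealIn S m) (hMS : ERealIn S M) : ∃ t ∈ S, m ≤ t ∧ (t : EReal) ≤ M := by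
  induction m with
  | bot =>
    induction M with
    | bot => exact absurd rfl hM
    | coe r => exact ⟨r, hMS r rfl, bot_le, le_rfl⟩
    | top => exact ⟨0, S.zero_mem, bot_le, le_top⟩
  | coe r => exact ⟨r, hmS r rfl, le_rfl, hmM⟩
  | top => exact absurd rfl hm

lemma exists_mem_forall_le_forall_le {ι κ : Type*} [Fintype ι] [Fintype κ] {lo : ι → EReal}
    {hi : κ → EReal} (hlo : ∀ i, lo i ≠ ⊤) (hhi : ∀ k, hi k ≠ ⊥) (hloS : ∀ i, ERealIn S (lo i))
    (hhiS : ∀ k, ERealIn S (hi k)) (h : ∀ i k, lo i ≤ hi k) :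
    ∃ t ∈ S, (∀ i, lo i ≤ t) ∧ ∀ k, (t : EReal) ≤ hi k := by
  obtain ⟨t, htS, hmt, htM⟩ := exists_mem_between (m := univ.sup lo) (M := univ.inf hi)
    (Finset.sup_le fun i _ => Finset.le_inf fun k _ => h i k)
    ((Finset.sup_lt_iff bot_lt_top).2 fun i _ => (hlo i).lt_top).ne
    ((Finset.lt_inf_iff bot_lt_top).2 fun k _ => (hhi k).bot_lt).ne'
    (finset_sup fun i _ => hloS i) (finset_inf fun k _ => hhiS k)
  exact ⟨t, htS, fun i => (Finset.le_sup (mem_univ i)).trans hmt,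
    fun k => htM.trans (Finset.inf_le (mem_univ k))⟩

end ERealIn

section Submodular

variable {U : Type*} [DecidableEq U]

lemma Submodular.ne_bot [Fintype U] {ρ : Finset U → EReal} (hρ : Submodular ρ)
    (huniv : ρ univ = 0) (X : Finset U) : ρ X ≠ ⊥ := by
  intro hX
  have h := hρ.2 X (univ \ X)
  rw [inter_sdiff_self, union_sdiff_of_subset (subset_univ X), hρ.1, huniv, hX] at h
  simp at h

lemma Submodular.add {f g : Finset U → EReal} (hf : Submodular f) (hg : Submodular g) :
    Submodular (fun X => f X + g X) := by
  refine ⟨by simp [hf.1, hg.1], fun X Y => ?_⟩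
  calc f (X ∩ Y) + g (X ∩ Y) + (f (X ∪ Y) + g (X ∪ Y))
      = f (X ∩ Y) + f (X ∪ Y) + (g (X ∩ Y) + g (X ∪ Y)) := add_add_add_comm _ _ _ _
    _ ≤ f X + f Y + (g X + g Y) := add_le_add (hf.2 X Y) (hg.2 X Y)
    _ = f X + g X + (f Y + g Y) := add_add_add_comm _ _ _ _

noncomputable def arcCut (i j : U) (l u : EReal) (X : Finset U) : EReal :=
  (if i ∈ X ∧ j ∉ X then l else 0) - if i ∉ X ∧ j ∈ X then u else 0

lemma submodular_neg_arcCut (i j : U) {l u : EReal} (hlu : l ≤ u) (hl : l ≠ ⊤) (hu : u ≠ ⊥) :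
    Submodular (fun X => -arcCut i j l u X) := by
  have key : 0 ≤ u + -l := (EReal.sub_nonneg (.inr hl) (.inl hu)).2 hlu
  refine ⟨by simp [arcCut], fun X Y => ?_⟩
  by_cases hiX : i ∈ X <;> by_cases hjX : j ∈ X <;> by_cases hiY : i ∈ Y <;>
    by_cases hjY : j ∈ Y <;> simp [arcCut, hiX, hjX, hiY, hjY, key, add_comm (-l) u]

lemma arcCut_ne_top (i j : U) {l u : EReal} (hl : l ≠ ⊤) (hu : u ≠ ⊥) (X : Finset U) :
    arcCut i j l u X ≠ ⊤ :=
  EReal.add_ne_top (by split_ifs <;> simp [hl]) (by split_ifs <;> simp [hu])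

lemma ERealIn.arcCut {S : AddSubgroup ℝ} (i j : U) {l u : EReal} (hl : ERealIn S l)
    (hu : ERealIn S u) (X : Finset U) : ERealIn S (arcCut i j l u X) :=
  (hl.ite (coe S.zero_mem)).sub (hu.ite (coe S.zero_mem))

end Submodular

lemma EReal.coe_finset_sum {ι : Type*} (s : Finset ι) (f : ι → ℝ) :
    ((∑ i ∈ s, f i : ℝ) : EReal) = ∑ i ∈ s, (f i : EReal) :=
  map_sum (⟨⟨(↑), EReal.coe_zero⟩, EReal.coe_add⟩ : ℝ →+ EReal) f s

section Flow

variable {U A : Type*} [DecidableEq U] [Fintype A]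

lemma sum_sfBoundary (tail head : A → U) (φ : A → ℝ) (X : Finset U) :
    ∑ u ∈ X, SFBoundary tail head φ u =
      ∑ a, ((if tail a ∈ X then φ a else 0) - if head a ∈ X then φ a else 0) := by
  simp only [SFBoundary, sum_sub_distrib, sum_filter]
  rw [sum_comm, sum_comm (s := X)]
  simp only [sum_ite_eq]

lemma sum_sfBoundary_univ [Fintype U] (tail head : A → U) (φ : A → ℝ) :
    ∑ u, SFBoundary tail head φ u = 0 := by
  simp [sum_sfBoundary]

lemma sfCut_le_sum_sfBoundary (tail head : A → U) {blow bup : A → EReal} {φ : A → ℝ}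
    (hφ : ∀ a, blow a ≤ (φ a : EReal) ∧ (φ a : EReal) ≤ bup a) (X : Finset U) :
    SFCut tail head blow bup X ≤ ((∑ u ∈ X, SFBoundary tail head φ u : ℝ) : EReal) := by
  have hflux : ∑ u ∈ X, SFBoundary tail head φ u =
      (∑ a ∈ univ.filter (fun a => tail a ∈ X ∧ head a ∉ X), φ a) -
        ∑ a ∈ univ.filter (fun a => tail a ∉ X ∧ head a ∈ X), φ a := by
    rw [sum_sfBoundary, sum_filter, sum_filter, ← sum_sub_distrib]
    refine sum_congr rfl fun a _ => ?_
    by_cases ht : tail a ∈ X <;> by_cases hh : head a ∈ X <;> simp [ht, hh]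
  rw [hflux, EReal.coe_sub, EReal.coe_finset_sum, EReal.coe_finset_sum]
  exact EReal.sub_le_sub (sum_le_sum fun a _ => (hφ a).1) (sum_le_sum fun a _ => (hφ a).2)

lemma sfCut_le_of_sfFeasible [Fintype U] {tail head : A → U} {blow bup : A → EReal}
    {ρ : Finset U → EReal} {φ : A → ℝ} (hφ : SFFeasible tail head blow bup ρ φ) (X : Finset U) :
    SFCut tail head blow bup X ≤ ρ X :=
  (sfCut_le_sum_sfBoundary tail head hφ.2 X).trans (hφ.1.2 X)

lemma sfFeasible_zero_of_isEmpty [Fintype U] [IsEmpty A] {tail head : A → U}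
    {blow bup : A → EReal} {ρ : Finset U → EReal} (hρuniv : ρ univ = 0)
    (hcut : ∀ X, SFCut tail head blow bup X ≤ ρ X) :
    SFFeasible tail head blow bup ρ 0 := by
  refine ⟨⟨by simp [sum_sfBoundary, hρuniv], fun X => ?_⟩, isEmptyElim⟩
  simpa [sum_sfBoundary, SFCut] using hcut X

variable {B : Type*} [Fintype B] (e : B ≃ A)

lemma sfBoundary_comp_equiv (tail head : A → U) (φ : A → ℝ) :
    SFBoundary (tail ∘ e) (head ∘ e) (φ ∘ e) = SFBoundary tail head φ := by
  funext u
  simp only [SFBoundary, sum_filter, Function.comp_apply]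
  rw [e.sum_comp fun a => if tail a = u then φ a else 0,
    e.sum_comp fun a => if head a = u then φ a else 0]

lemma sfCut_comp_equiv (tail head : A → U) (blow bup : A → EReal) :
    SFCut (tail ∘ e) (head ∘ e) (blow ∘ e) (bup ∘ e) = SFCut tail head blow bup := by
  funext X
  simp only [SFCut, sum_filter, Function.comp_apply]
  rw [e.sum_comp fun a => if tail a ∈ X ∧ head a ∉ X then blow a else 0,
    e.sum_comp fun a => if tail a ∉ X ∧ head a ∈ X then bup a else 0]

lemma sfFeasible_comp_equiv [Fintype U] (tail head : A → U) (blow bup : A → EReal)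
    (ρ : Finset U → EReal) (φ : A → ℝ) :
    SFFeasible (tail ∘ e) (head ∘ e) (blow ∘ e) (bup ∘ e) ρ (φ ∘ e) ↔
      SFFeasible tail head blow bup ρ φ := by
  simp only [SFFeasible, sfBoundary_comp_equiv, e.forall_congr_left, Function.comp_apply,
    e.apply_symm_apply]

end Flow

section Option

variable {U A : Type*} [DecidableEq U] [Fintype A]

lemma sfCut_option {tail head : Option A → U} {blow bup : Option A → EReal}
    (hbup : ∀ a, bup a ≠ ⊥) (X : Finset U) :
    SFCut tail head blow bup X =
      SFCut (tail ∘ some) (head ∘ some) (blow ∘ some) (bup ∘ some) X +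
        arcCut (tail none) (head none) (blow none) (bup none) X := by
  simp only [SFCut, arcCut, sum_filter, Fintype.sum_option, Function.comp_apply]
  have hsum : (∑ a, if tail (some a) ∉ X ∧ head (some a) ∈ X then bup (some a) else 0) ≠ ⊥ :=
    sum_induction _ (· ≠ ⊥) (fun _ _ h₁ h₂ => EReal.add_ne_bot_iff.2 ⟨h₁, h₂⟩)
      EReal.zero_ne_bot fun a _ => by split_ifs <;> simp [hbup]
  have hnone : (if tail none ∉ X ∧ head none ∈ X then bup none else 0) ≠ ⊥ := by
    split_ifs <;> simp [hbup]
  rw [add_comm _ (∑ a, _), add_comm _ (∑ a, _), EReal.add_sub_add_comm (.inl hsum) (.inr hnone)]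

lemma sum_sfBoundary_option (tail head : Option A → U) (φ : Option A → ℝ) (X : Finset U) :
    ∑ u ∈ X, SFBoundary tail head φ u =
      ∑ u ∈ X, SFBoundary (tail ∘ some) (head ∘ some) (φ ∘ some) u +
        ((if tail none ∈ X then φ none else 0) - if head none ∈ X then φ none else 0) := by
  rw [sum_sfBoundary, sum_sfBoundary, Fintype.sum_option, add_comm]
  rfl

end Option

section ArcValue

variable {U : Type*} [DecidableEq U]

lemma Submodular.coe_sum_sub_le_sub_coe_sum {ρ : Finset U → EReal} (hρ : Submodular ρ)
    {x : U → ℝ} {X Y : Finset U}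
    (hinter : ((∑ v ∈ X ∩ Y, x v : ℝ) : EReal) ≤ ρ (X ∩ Y))
    (hunion : ((∑ v ∈ X ∪ Y, x v : ℝ) : EReal) ≤ ρ (X ∪ Y)) :
    ((∑ v ∈ X, x v : ℝ) : EReal) - ρ X ≤ ρ Y - ((∑ v ∈ Y, x v : ℝ) : EReal) := by
  rw [EReal.le_sub_iff_add_le (.inl (EReal.coe_ne_bot _)) (.inl (EReal.coe_ne_top _)),
    sub_eq_add_neg, add_right_comm, ← sub_eq_add_neg]
  refine EReal.sub_le_of_le_add ?_
  calc ((∑ v ∈ X, x v : ℝ) : EReal) + ((∑ v ∈ Y, x v : ℝ) : EReal)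
      = ((∑ v ∈ X ∩ Y, x v : ℝ) : EReal) + ((∑ v ∈ X ∪ Y, x v : ℝ) : EReal) := by
        rw [← EReal.coe_add, ← EReal.coe_add, ← sum_union_inter, add_comm]
    _ ≤ ρ (X ∩ Y) + ρ (X ∪ Y) := add_le_add hinter hunion
    _ ≤ ρ X + ρ Y := hρ.2 X Y
    _ = ρ Y + ρ X := add_comm _ _

lemma coe_sum_add_arc_le {ρ : Finset U → EReal} (hρbot : ∀ X, ρ X ≠ ⊥) {x : U → ℝ} {i j : U}
    {t : ℝ} (X : Finset U)
    (h_neutral : (i ∈ X ↔ j ∈ X) → ((∑ v ∈ X, x v : ℝ) : EReal) ≤ ρ X)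
    (h_in : i ∉ X → j ∈ X → ((∑ v ∈ X, x v : ℝ) : EReal) - ρ X ≤ t)
    (h_out : i ∈ X → j ∉ X → (t : EReal) ≤ ρ X - ((∑ v ∈ X, x v : ℝ) : EReal)) :
    ((∑ v ∈ X, x v + ((if i ∈ X then t else 0) - if j ∈ X then t else 0) : ℝ) : EReal) ≤ ρ X := by
  by_cases hiX : i ∈ X <;> by_cases hjX : j ∈ X
  · simpa [hiX, hjX] using h_neutral (by simp [hiX, hjX])
  · simpa [hiX, hjX, add_comm] using EReal.add_le_of_le_sub (h_out hiX hjX)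
  · have h := (EReal.sub_le_iff_le_add (.inl (hρbot X)) (.inr (EReal.coe_ne_bot t))).1
      (h_in hiX hjX)
    simpa [hiX, hjX, ← sub_eq_add_neg] using EReal.sub_le_of_le_add' h
  · simpa [hiX, hjX] using h_neutral (by simp [hiX, hjX])

lemma exists_arc_value [Fintype U] (S : AddSubgroup ℝ) {ρ : Finset U → EReal}
    (hρ : Submodular ρ) (hρbot : ∀ X, ρ X ≠ ⊥) (hρS : ∀ X, ERealIn S (ρ X))
    {x : U → ℝ} (hxS : ∀ v, x v ∈ S) (i j : U) {l u : EReal} (hl : l ≠ ⊤) (hu : u ≠ ⊥)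
    (hlu : l ≤ u) (hlS : ERealIn S l) (huS : ERealIn S u)
    (hx : ∀ X, ((∑ v ∈ X, x v : ℝ) : EReal) + arcCut i j l u X ≤ ρ X) :
    ∃ t ∈ S, l ≤ t ∧ (t : EReal) ≤ u ∧ ∀ X,
      ((∑ v ∈ X, x v + ((if i ∈ X then t else 0) - if j ∈ X then t else 0) : ℝ) : EReal) ≤ ρ X := by
  set s : Finset U → EReal := fun X => ((∑ v ∈ X, x v : ℝ) : EReal)
  have hsS : ∀ X, ERealIn S (s X) := fun X => ERealIn.coe (sum_mem fun v _ => hxS v)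
  have h_neutral : ∀ X, (i ∈ X ↔ j ∈ X) → s X ≤ ρ X := fun X hX => by
    simpa [arcCut, hX] using hx X
  have h_in : ∀ X, i ∉ X → j ∈ X → s X - ρ X ≤ u := fun X hi hj =>
    EReal.sub_le_of_le_add' <| (EReal.sub_le_iff_le_add (.inl hu) (.inr (hρbot X))).1 <| by
      simpa [arcCut, hi, hj, sub_eq_add_neg] using hx X
  have h_out : ∀ Y, i ∈ Y → j ∉ Y → l ≤ ρ Y - s Y := fun Y hi hj =>
    (EReal.le_sub_iff_add_le (.inl (EReal.coe_ne_bot _)) (.inl (EReal.coe_ne_top _))).2 <|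
      add_comm (s Y) l ▸ by simpa [arcCut, hi, hj] using hx Y
  -- `none` indexes the capacity bounds; the others come from the sets entered, resp. left, by `ij`
  obtain ⟨t, htS, hlo_t, ht_hi⟩ := ERealIn.exists_mem_forall_le_forall_le
    (lo := fun o : Option {X // i ∉ X ∧ j ∈ X} => o.elim l fun X => s X.1 - ρ X.1)
    (hi := fun o : Option {Y // i ∈ Y ∧ j ∉ Y} => o.elim u fun Y => ρ Y.1 - s Y.1)
    (Option.forall.2 ⟨hl, fun X =>
      EReal.add_ne_top (EReal.coe_ne_top _) (by simpa using hρbot X.1)⟩)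
    (Option.forall.2 ⟨hu, fun Y =>
      EReal.add_ne_bot_iff.2 ⟨hρbot Y.1, by simp [s, ← EReal.coe_neg]⟩⟩)
    (Option.forall.2 ⟨hlS, fun X => (hsS X.1).sub (hρS X.1)⟩)
    (Option.forall.2 ⟨huS, fun Y => (hρS Y.1).sub (hsS Y.1)⟩)
    (Option.forall.2 ⟨Option.forall.2 ⟨hlu, fun Y => h_out Y.1 Y.2.1 Y.2.2⟩, fun X =>
      Option.forall.2 ⟨h_in X.1 X.2.1 X.2.2, fun Y =>
        hρ.coe_sum_sub_le_sub_coe_sum (h_neutral _ (by simp [X.2.1, Y.2.2]))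
          (h_neutral _ (by simp [X.2.2, Y.2.1]))⟩⟩)
  exact ⟨t, htS, hlo_t none, ht_hi none, fun X => coe_sum_add_arc_le hρbot X (h_neutral X)
    (fun hiX hjX => hlo_t (some ⟨X, hiX, hjX⟩)) (fun hiX hjX => ht_hi (some ⟨X, hiX, hjX⟩))⟩

end ArcValue

section Feasibility

variable {U : Type*} [Fintype U] [DecidableEq U]

lemma exists_sfFeasible_of_sfFeasible_some (S : AddSubgroup ℝ) {A : Type*} [Fintype A]
    {tail head : Option A → U} {blow bup : Option A → EReal} {ρ : Finset U → EReal}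
    (hρ : Submodular ρ) (hρuniv : ρ univ = 0) (hρS : ∀ X, ERealIn S (ρ X))
    (hblow : blow none ≠ ⊤) (hbup : bup none ≠ ⊥) (hcap : blow none ≤ bup none)
    (hblowS : ERealIn S (blow none)) (hbupS : ERealIn S (bup none)) {φ' : A → ℝ}
    (hφ' : SFFeasible (tail ∘ some) (head ∘ some) (blow ∘ some) (bup ∘ some)
      (fun X => ρ X - arcCut (tail none) (head none) (blow none) (bup none) X) φ')
    (hφ'S : ∀ a, φ' a ∈ S) :
    ∃ φ, SFFeasible tail head blow bup ρ φ ∧ ∀ a, φ a ∈ S := by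
  obtain ⟨t, htS, hlt, htu, ht⟩ := exists_arc_value S hρ (hρ.ne_bot hρuniv) hρS
    (x := SFBoundary (tail ∘ some) (head ∘ some) φ')
    (fun v => sub_mem (sum_mem fun a _ => hφ'S a) (sum_mem fun a _ => hφ'S a))
    (tail none) (head none) hblow hbup hcap hblowS hbupS
    (fun X => EReal.add_le_of_le_sub (hφ'.1.2 X))
  refine ⟨fun o => o.elim t φ', ⟨⟨?_, fun X => ?_⟩, Option.forall.2 ⟨⟨hlt, htu⟩, hφ'.2⟩⟩,
    Option.forall.2 ⟨htS, hφ'S⟩⟩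
  · rw [sum_sfBoundary_univ, hρuniv]
    rfl
  · rw [sum_sfBoundary_option]
    exact ht X

theorem exists_sfFeasible_of_sfCut_le (S : AddSubgroup ℝ) {A : Type*} [hA : Fintype A]
    (tail head : A → U) (blow bup : A → EReal) (ρ : Finset U → EReal) (hρ : Submodular ρ)
    (hρuniv : ρ univ = 0) (hρS : ∀ X, ERealIn S (ρ X)) (hblow : ∀ a, blow a ≠ ⊤)
    (hbup : ∀ a, bup a ≠ ⊥) (hcap : ∀ a, blow a ≤ bup a) (hblowS : ∀ a, ERealIn S (blow a))
    (hbupS : ∀ a, ERealIn S (bup a)) (hcut : ∀ X, SFCut tail head blow bup X ≤ ρ X) :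
    ∃ φ, SFFeasible tail head blow bup ρ φ ∧ ∀ a, φ a ∈ S := by
  -- the induction motive must quantify over the `Fintype` instance, so it runs on `Finite A`
  have : Finite A := inferInstance
  revert ρ tail head blow bup
  revert hA
  apply Finite.induction_empty_option (α := A)
  · intro B A e ih _ tail head blow bup ρ hρ hρuniv hρS hblow hbup hcap hblowS hbupS hcut
    let := Fintype.ofEquiv _ e.symm
    obtain ⟨φ, hφ, hφS⟩ := ih (tail ∘ e) (head ∘ e) (blow ∘ e) (bup ∘ e) ρ hρ hρuniv hρS
      (fun b => hblow _) (fun b => hbup _) (fun b => hcap _) (fun b => hblowS _)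
      (fun b => hbupS _) (by rwa [sfCut_comp_equiv])
    refine ⟨φ ∘ e.symm, ?_, fun a => hφS _⟩
    rw [← sfFeasible_comp_equiv e]
    simpa [Function.comp_def] using hφ
  · intro _ tail head blow bup ρ hρ hρuniv hρS hblow hbup hcap hblowS hbupS hcut
    exact ⟨0, sfFeasible_zero_of_isEmpty hρuniv hcut, isEmptyElim⟩
  · intro A _ ih inst tail head blow bup ρ hρ hρuniv hρS hblow hbup hcap hblowS hbupS hcut
    obtain rfl : inst = instFintypeOption := Subsingleton.elim _ _
    set c := arcCut (tail none) (head none) (blow none) (bup none)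
    obtain ⟨φ', hφ', hφ'S⟩ := ih (tail ∘ some) (head ∘ some) (blow ∘ some) (bup ∘ some)
      (fun X => ρ X - c X)
      (hρ.add (submodular_neg_arcCut _ _ (hcap none) (hblow none) (hbup none)))
      (by simp [c, arcCut, hρuniv]) (fun X => (hρS X).sub (ERealIn.arcCut _ _ (hblowS none)
        (hbupS none) X))
      (fun a => hblow _) (fun a => hbup _) (fun a => hcap _) (fun a => hblowS _)
      (fun a => hbupS _) fun X => (EReal.le_sub_iff_add_le (.inr (hρ.ne_bot hρuniv X))
        (.inl (arcCut_ne_top _ _ (hblow none) (hbup none) X))).2 (sfCut_option hbup X ▸ hcut X)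
    exact exists_sfFeasible_of_sfFeasible_some S hρ hρuniv hρS (hblow none) (hbup none) (hcap none)
      (hblowS none) (hbupS none) hφ' hφ'S

end Feasibility

lemma eRealIn_intRange {x y : EReal} (hy : y = ⊥ ∨ y = ⊤)
    (hx : x = y ∨ ∃ z : ℤ, x = ((z : ℝ) : EReal)) : ERealIn (Int.castAddHom ℝ).range x := by
  rintro r rfl
  rcases hx with rfl | ⟨z, hz⟩
  · rcases hy with h | h <;> simp at h
  · exact ⟨z, (EReal.coe_injective hz).symm⟩

theorem submodular_flow_feasibility_general
    {U A : Type*} [Fintype U] [Fintype A] [DecidableEq U]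
    (tail head : A → U) (blow bup : A → EReal) (ρ : Finset U → EReal)
    (hρsub : Submodular ρ) (hρuniv : ρ univ = 0)
    (hblow : ∀ a, blow a ≠ ⊤) (hbup : ∀ a, bup a ≠ ⊥)
    (hcap : ∀ a, blow a ≤ bup a) :
    ((∃ φ : A → ℝ, SFFeasible tail head blow bup ρ φ) ↔
      ∀ X : Finset U, SFCut tail head blow bup X ≤ ρ X) ∧
    ((∀ a, blow a = ⊥ ∨ ∃ z : ℤ, blow a = ((z : ℝ) : EReal)) →
     (∀ a, bup a = ⊤ ∨ ∃ z : ℤ, bup a = ((z : ℝ) : EReal)) →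
     (∀ X, ρ X = ⊤ ∨ ∃ z : ℤ, ρ X = ((z : ℝ) : EReal)) →
     (∃ φ : A → ℝ, SFFeasible tail head blow bup ρ φ) →
     ∃ φ : A → ℝ, SFFeasible tail head blow bup ρ φ ∧ ∀ a, ∃ z : ℤ, φ a = (z : ℝ)) := by
  have hmem_top : ∀ x, ERealIn ⊤ x := fun _ _ _ => AddSubgroup.mem_top _
  refine ⟨⟨fun ⟨φ, hφ⟩ => sfCut_le_of_sfFeasible hφ, fun hcut => ?_⟩,
    fun hblowZ hbupZ hρZ ⟨φ₀, hφ₀⟩ => ?_⟩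
  · obtain ⟨φ, hφ, -⟩ := exists_sfFeasible_of_sfCut_le ⊤ tail head blow bup ρ hρsub hρuniv
      (fun _ => hmem_top _) hblow hbup hcap (fun _ => hmem_top _) (fun _ => hmem_top _) hcut
    exact ⟨φ, hφ⟩
  · obtain ⟨φ, hφ, hφZ⟩ := exists_sfFeasible_of_sfCut_le _ tail head blow bup ρ hρsub hρuniv
      (fun X => eRealIn_intRange (.inr rfl) (hρZ X)) hblow hbup hcap
      (fun a => eRealIn_intRange (.inl rfl) (hblowZ a))
      (fun a => eRealIn_intRange (.inr rfl) (hbupZ a)) (sfCut_le_of_sfFeasible hφ₀)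
    exact ⟨φ, hφ, fun a => (hφZ a).imp fun z hz => hz.symm⟩

/-- **Frank's feasibility theorem for submodular flows.**
A submodular flow instance has a feasible flow iff `κ(X) ≤ ρ(X)` for all `X ⊆ U`;
moreover, if the data are integer-valued (wherever finite), then in the feasible case
there is an integral feasible flow. -/
theorem submodular_flow_feasibility
    {U A : Type*} [Fintype U] [Fintype A] [DecidableEq U]
    (tail head : A → U) (blow bup : A → EReal) (ρ : Finset U → EReal)
    (hρsub : Submodular ρ) (hρbot : ∀ X, ρ X ≠ ⊥) (hρuniv : ρ univ = 0)
    (hblow : ∀ a, blow a ≠ ⊤) (hbup : ∀ a, bup a ≠ ⊥)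
    (hcap : ∀ a, blow a ≤ bup a) :
    ((∃ φ : A → ℝ, SFFeasible tail head blow bup ρ φ) ↔
      ∀ X : Finset U, SFCut tail head blow bup X ≤ ρ X) ∧
    ((∀ a, blow a = ⊥ ∨ ∃ z : ℤ, blow a = ((z : ℝ) : EReal)) →
     (∀ a, bup a = ⊤ ∨ ∃ z : ℤ, bup a = ((z : ℝ) : EReal)) →
     (∀ X, ρ X = ⊤ ∨ ∃ z : ℤ, ρ X = ((z : ℝ) : EReal)) →
     (∃ φ : A → ℝ, SFFeasible tail head blow bup ρ φ) →
     ∃ φ : A → ℝ, SFFeasible tail head blow bup ρ φ ∧ ∀ a, ∃ z : ℤ, φ a = (z : ℝ)) :=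
  submodular_flow_feasibility_general tail head blow bup ρ hρsub hρuniv hblow hbup hcap
end

section
/- Let U be a finite set and ρ : 2^{U^±} → ℝ ∪ {+∞} a t-monotone submodular function. Then the function β : 3^U → ℝ ∪ {+∞} defined by β(Y,Z) := ρ(Y^+ ∪ Z^−) is bisubmodular. -/
open Finset

/-- `Y⁺ = {i⁺ : i ∈ Y}` in the signed extension `U^± = U × Bool` (`true` = `+`). -/
def posPart {U : Type*} [DecidableEq U] (Y : Finset U) : Finset (U × Bool) :=
  Y.image (fun i => (i, true))

/-- `Z⁻ = {i⁻ : i ∈ Z}`. -/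
def negPart {U : Type*} [DecidableEq U] (Z : Finset U) : Finset (U × Bool) :=
  Z.image (fun i => (i, false))

/-- `X̲`: remove from `X ⊆ U^±` all pairs `{i⁺, i⁻} ⊆ X`. -/
def reduceSigned {U : Type*} [DecidableEq U] (X : Finset (U × Bool)) :
    Finset (U × Bool) :=
  X.filter (fun p => ¬((p.1, true) ∈ X ∧ (p.1, false) ∈ X))

/-- A function on `2^{U^±}` is transversally monotone (t-monotone) if
`ρ(X̲) ≤ ρ(X)` for all `X`. -/
def TMono {U : Type*} [DecidableEq U] (ρ : Finset (U × Bool) → EReal) : Prop :=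
  ∀ X : Finset (U × Bool), ρ (reduceSigned X) ≤ ρ X

/-- Bisubmodularity of `β : 3^U → ℝ ∪ {+∞}`. -/
def Bisubmodular {U : Type*} [DecidableEq U] (β : Finset U → Finset U → EReal) : Prop :=
  β ∅ ∅ = 0 ∧ ∀ Y Z Y' Z' : Finset U, Disjoint Y Z → Disjoint Y' Z' →
    β (Y ∩ Y') (Z ∩ Z') + β ((Y ∪ Y') \ (Z ∪ Z')) ((Z ∪ Z') \ (Y ∪ Y')) ≤ β Y Z + β Y' Z'

/-! Under `(Y, Z) ↦ Y⁺ ∪ Z⁻`, the meet of two pairs goes to the intersection of the signed sets and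
their join `((Y ∪ Y') \ (Z ∪ Z'), (Z ∪ Z') \ (Y ∪ Y'))` to the reduction of their union. So the
bisubmodular inequality is the submodular one with `ρ (X ∪ X')` lowered to `ρ` of its reduction,
which t-monotonicity permits. -/

section SignedSets

variable {U : Type*} [DecidableEq U]

@[simp]
lemma mem_posPart {Y : Finset U} {p : U × Bool} : p ∈ posPart Y ↔ p.1 ∈ Y ∧ p.2 = true := by
  obtain ⟨i, b⟩ := p
  simp [_root_.posPart]

@[simp]
lemma mem_negPart {Z : Finset U} {p : U × Bool} : p ∈ negPart Z ↔ p.1 ∈ Z ∧ p.2 = false := by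
  obtain ⟨i, b⟩ := p
  simp [_root_.negPart]

lemma posPart_union_negPart_inter (Y Z Y' Z' : Finset U) :
    (posPart Y ∪ negPart Z) ∩ (posPart Y' ∪ negPart Z') =
      posPart (Y ∩ Y') ∪ negPart (Z ∩ Z') := by
  ext ⟨i, b⟩
  cases b <;> simp

lemma posPart_union_negPart_union (Y Z Y' Z' : Finset U) :
    (posPart Y ∪ negPart Z) ∪ (posPart Y' ∪ negPart Z') =
      posPart (Y ∪ Y') ∪ negPart (Z ∪ Z') := by
  ext ⟨i, b⟩
  cases b <;> simp

lemma reduceSigned_posPart_union_negPart (Y Z : Finset U) :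
    reduceSigned (posPart Y ∪ negPart Z) = posPart (Y \ Z) ∪ negPart (Z \ Y) := by
  ext ⟨i, b⟩
  cases b <;> simp [reduceSigned] <;> tauto

end SignedSets

lemma Submodular.add_reduceSigned_union_le {U : Type*} [DecidableEq U]
    {ρ : Finset (U × Bool) → EReal} (hsub : Submodular ρ) (hmono : TMono ρ)
    (X X' : Finset (U × Bool)) :
    ρ (X ∩ X') + ρ (reduceSigned (X ∪ X')) ≤ ρ X + ρ X' :=
  (add_le_add_right (hmono _) _).trans (hsub.2 X X')

theorem bisubmodular_of_tmono_submodular_general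
    {U : Type*} [DecidableEq U]
    (ρ : Finset (U × Bool) → EReal) (hsub : Submodular ρ) (hmono : TMono ρ) :
    Bisubmodular (fun Y Z : Finset U => ρ (posPart Y ∪ negPart Z)) := by
  refine ⟨by simpa [_root_.posPart, _root_.negPart] using hsub.1, fun Y Z Y' Z' _ _ => ?_⟩
  simpa only [posPart_union_negPart_inter, posPart_union_negPart_union,
    reduceSigned_posPart_union_negPart] using
    hsub.add_reduceSigned_union_le hmono (posPart Y ∪ negPart Z) (posPart Y' ∪ negPart Z')

/-- If `ρ` is a t-monotone submodular function on `2^{U^±}`, then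
`β(Y,Z) := ρ(Y⁺ ∪ Z⁻)` is bisubmodular on `3^U`. -/
theorem bisubmodular_of_tmono_submodular
    {U : Type*} [Fintype U] [DecidableEq U]
    (ρ : Finset (U × Bool) → EReal) (hsub : Submodular ρ) (hmono : TMono ρ) :
    Bisubmodular (fun Y Z : Finset U => ρ (posPart Y ∪ negPart Z)) :=
  bisubmodular_of_tmono_submodular_general ρ hsub hmono
end

section
/- Let β : 3^U → ℝ ∪ {+∞} be a bisubmodular function reducible to a t-monotone submodular function ρ : 2^{U^±} → ℝ ∪ {+∞}, and suppose that the bisubmodular flow instance ((U,E;∂), c̲, c̄, β) (equivalently, the associated submodular flow instance ((U^±, A), b̲, b̄, ρ)) is infeasible. Then (Y,Z) ∈ 3^U is a maximum violating cut for the bisubmodular flow instance if and only if Y^+ ∪ Z^− is a maximum violating cut for the associated submodular flow instance. -/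
open Finset

/-- The indicator vector `χ_i ∈ ℤ^U`. -/
def chi {U : Type*} [DecidableEq U] (i : U) : U → ℤ := fun j => if j = i then 1 else 0

/-- Sign of a boolean: `true ↦ +1`, `false ↦ −1`. -/
def sgn (b : Bool) : ℤ := if b then 1 else -1

/-- Boundary operator of a bidirected graph given by signed endpoints:
for `e` with endpoints `(i, σ_i), (j, σ_j)`, `∂e = σ_i χ_i + σ_j χ_j`. -/
def bdOf {U E : Type*} [DecidableEq U] (ep : E → (U × Bool) × (U × Bool)) :
    E → U → ℤ :=
  fun e u => sgn (ep e).1.2 * chi (ep e).1.1 u + sgn (ep e).2.2 * chi (ep e).2.1 u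

/-- No self-loops of type `χ_i − χ_i`: a loop must have both signs equal. -/
def NoBadLoops {U E : Type*} (ep : E → (U × Bool) × (U × Bool)) : Prop :=
  ∀ e, (ep e).1.1 = (ep e).2.1 → (ep e).1.2 = (ep e).2.2

/-- The projection `Φ`. -/
noncomputable def Phi {U : Type*} (x : U × Bool → ℝ) : U → ℝ :=
  fun i => (x (i, true) - x (i, false)) / 2

/-- The lift `Ψ`. -/
noncomputable def Psi {U : Type*} (z : U → ℝ) : U × Bool → ℝ :=
  fun p => if p.2 then z p.1 else -z p.1

/-- Membership in the bisubmodular polyhedron `D(β)`. -/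
def InBisubPoly {U : Type*} [Fintype U] [DecidableEq U]
    (β : Finset U → Finset U → EReal) (z : U → ℝ) : Prop :=
  ∀ Y Z : Finset U, Disjoint Y Z →
    ((∑ i ∈ Y, z i - ∑ i ∈ Z, z i : ℝ) : EReal) ≤ β Y Z

/-- The boundary `∇ψ = Σ_e ψ(e) ∂e` of a bidirected flow. -/
def BFBoundary {U E : Type*} [Fintype E] (bd : E → U → ℤ) (ψ : E → ℝ) : U → ℝ :=
  fun u => ∑ e, ψ e * (bd e u : ℝ)

/-- Feasibility for the bisubmodular flow instance. -/
def BFFeasible {U E : Type*} [Fintype U] [Fintype E] [DecidableEq U]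
    (bd : E → U → ℤ) (clow cup : E → EReal) (β : Finset U → Finset U → EReal)
    (ψ : E → ℝ) : Prop :=
  InBisubPoly β (BFBoundary bd ψ) ∧
    ∀ e, clow e ≤ ((ψ e : ℝ) : EReal) ∧ ((ψ e : ℝ) : EReal) ≤ cup e

/-- Tail of the arcs of the associated submodular flow instance:
arc `(e, true)` is `i^{σ_i} → j^{−σ_j}`, arc `(e, false)` is `j^{σ_j} → i^{−σ_i}`. -/
def assocTail {U E : Type*} (ep : E → (U × Bool) × (U × Bool)) :
    E × Bool → U × Bool :=
  fun a => if a.2 then (ep a.1).1 else (ep a.1).2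

/-- Head of the arcs of the associated submodular flow instance. -/
def assocHead {U E : Type*} (ep : E → (U × Bool) × (U × Bool)) :
    E × Bool → U × Bool :=
  fun a => if a.2 then ((ep a.1).2.1, !(ep a.1).2.2) else ((ep a.1).1.1, !(ep a.1).1.2)

/-- The inner product `⟨∂e, χ_{Y,Z}⟩`. -/
def BFip {U E : Type*} (bd : E → U → ℤ) (e : E) (Y Z : Finset U) : ℤ :=
  ∑ u ∈ Y, bd e u - ∑ u ∈ Z, bd e u

/-- The cut function `κ̂(Y,Z)` of the bisubmodular flow instance. -/
noncomputable def BFCut {U E : Type*} [Fintype E] (bd : E → U → ℤ)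
    (clow cup : E → EReal) (Y Z : Finset U) : EReal :=
  (∑ e ∈ univ.filter (fun e => 0 < BFip bd e Y Z),
      ((BFip bd e Y Z : ℝ) : EReal) * clow e) +
    (∑ e ∈ univ.filter (fun e => BFip bd e Y Z < 0),
      ((BFip bd e Y Z : ℝ) : EReal) * cup e)

/-- `(Y,Z) ∈ 3^U` is a violating cut for the bisubmodular flow instance. -/
def BFViolating {U E : Type*} [Fintype E] [DecidableEq U] (bd : E → U → ℤ)
    (clow cup : E → EReal) (β : Finset U → Finset U → EReal)
    (Y Z : Finset U) : Prop :=
  Disjoint Y Z ∧ β Y Z < BFCut bd clow cup Y Z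

/-- A maximum violating cut for the bisubmodular flow instance: it maximizes
`κ̂(Y,Z) − β(Y,Z)` among all violating cuts. -/
def BFMaxViolating {U E : Type*} [Fintype E] [DecidableEq U] (bd : E → U → ℤ)
    (clow cup : E → EReal) (β : Finset U → Finset U → EReal)
    (Y Z : Finset U) : Prop :=
  BFViolating bd clow cup β Y Z ∧
    ∀ Y' Z' : Finset U, BFViolating bd clow cup β Y' Z' →
      BFCut bd clow cup Y' Z' - β Y' Z' ≤ BFCut bd clow cup Y Z - β Y Z

/-- `X ⊆ U'` is a violating cut for the submodular flow instance. -/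
def SFViolating {U A : Type*} [Fintype A] [DecidableEq U]
    (tail head : A → U) (blow bup : A → EReal) (ρ : Finset U → EReal)
    (X : Finset U) : Prop :=
  ρ X < SFCut tail head blow bup X

/-- A maximum violating cut for the submodular flow instance: it maximizes
`κ(X) − ρ(X)` among all violating cuts. -/
def SFMaxViolating {U A : Type*} [Fintype A] [DecidableEq U]
    (tail head : A → U) (blow bup : A → EReal) (ρ : Finset U → EReal)
    (X : Finset U) : Prop :=
  SFViolating tail head blow bup ρ X ∧
    ∀ X' : Finset U, SFViolating tail head blow bup ρ X' →
      SFCut tail head blow bup X' - ρ X' ≤ SFCut tail head blow bup X - ρ X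


section Helpers

variable {U E : Type*}

lemma er_sum_ne_bot {ι : Type*} (s : Finset ι) (g : ι → EReal) (h : ∀ i ∈ s, g i ≠ ⊥) :
    ∑ i ∈ s, g i ≠ ⊥ := by
  induction s using Finset.cons_induction with
  | empty => simp
  | cons a s ha ih =>
    rw [Finset.sum_cons]
    simp only [ne_eq, EReal.add_eq_bot_iff, not_or]
    exact ⟨h a (by simp), ih fun i hi => h i (by simp [hi])⟩

lemma er_neg_sum {ι : Type*} (s : Finset ι) (g : ι → EReal) (h : ∀ i ∈ s, g i ≠ ⊥) :
    -∑ i ∈ s, g i = ∑ i ∈ s, -g i := by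
  induction s using Finset.cons_induction with
  | empty => simp
  | cons a s ha ih =>
    rw [Finset.sum_cons, Finset.sum_cons, EReal.neg_add (Or.inl (h a (by simp)))
      (Or.inr (er_sum_ne_bot s g fun i hi => h i (by simp [hi]))),
      sub_eq_add_neg, ih fun i hi => h i (by simp [hi])]

lemma er_sum_sub {ι : Type*} (s : Finset ι) (f g : ι → EReal) (h : ∀ i ∈ s, g i ≠ ⊥) :
    (∑ i ∈ s, f i) - (∑ i ∈ s, g i) = ∑ i ∈ s, (f i - g i) := by
  rw [sub_eq_add_neg, er_neg_sum s g h, ← Finset.sum_add_distrib]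
  simp [sub_eq_add_neg]

lemma er_pos_mul_ne_bot {a : ℝ} (ha : 0 < a) {x : EReal} (hx : x ≠ ⊥) :
    ((a : ℝ) : EReal) * x ≠ ⊥ := by
  induction x using EReal.rec with
  | bot => exact absurd rfl hx
  | top => rw [EReal.coe_mul_top_of_pos ha]; simp
  | coe y => rw [← EReal.coe_mul]; exact EReal.coe_ne_bot _

lemma er_two_mul (x : EReal) : (((2:ℝ)):EReal) * x = x + x := by
  induction x using EReal.rec with
  | bot => rw [EReal.mul_bot_of_pos (by norm_num)]; rfl
  | top => rw [EReal.mul_top_of_pos (by norm_num)]; rfl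
  | coe x => rw [← EReal.coe_mul, ← EReal.coe_add]; norm_num [two_mul]

lemma er_sub_self_nonpos (x : EReal) : x - x ≤ 0 := by
  induction x using EReal.rec with
  | bot => simp
  | top => simp
  | coe x => rw [← EReal.coe_sub]; simp

lemma mem_SYZ [DecidableEq U] (Y Z : Finset U) (p : U × Bool) :
    p ∈ posPart Y ∪ negPart Z ↔ (if p.2 then p.1 ∈ Y else p.1 ∈ Z) := by
  obtain ⟨u, b⟩ := p
  cases b <;> simp [_root_.posPart, _root_.negPart]

lemma BFip_eq [DecidableEq U] (ep : E → (U × Bool) × (U × Bool))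
    (e : E) (Y Z : Finset U) :
    BFip (bdOf ep) e Y Z =
      sgn (ep e).1.2 * ((if (ep e).1.1 ∈ Y then 1 else 0) - (if (ep e).1.1 ∈ Z then 1 else 0))
      + sgn (ep e).2.2 * ((if (ep e).2.1 ∈ Y then 1 else 0) - (if (ep e).2.1 ∈ Z then 1 else 0)) := by
  simp only [BFip, bdOf, chi, Finset.sum_add_distrib, ← Finset.mul_sum,
    Finset.sum_ite_eq', mul_ite, mul_one, mul_zero]
  split_ifs <;> ring

lemma edge_leave [DecidableEq U] (ep : E → (U × Bool) × (U × Bool))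
    (clow : E → EReal) (Y Z : Finset U) (hYZ : Disjoint Y Z) (e : E) :
    (∑ b : Bool, if (assocTail ep (e, b) ∈ _root_.posPart Y ∪ _root_.negPart Z ∧
        assocHead ep (e, b) ∉ _root_.posPart Y ∪ _root_.negPart Z) then clow e else 0)
    = if 0 < BFip (bdOf ep) e Y Z
      then (((BFip (bdOf ep) e Y Z : ℤ) : ℝ) : EReal) * clow e else 0 := by
  have hd : ∀ u, u ∈ Y → u ∉ Z := fun u hu => Finset.disjoint_left.mp hYZ hu
  rcases hep : ep e with ⟨⟨i, si⟩, ⟨j, sj⟩⟩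
  rw [Fintype.sum_bool]
  simp only [assocTail, assocHead, hep, BFip_eq, mem_SYZ]
  cases si <;> cases sj <;>
    by_cases hiY : i ∈ Y <;> by_cases hiZ : i ∈ Z <;>
    by_cases hjY : j ∈ Y <;> by_cases hjZ : j ∈ Z <;>
    simp_all [sgn] <;> norm_num [er_two_mul]

lemma edge_enter [DecidableEq U] (ep : E → (U × Bool) × (U × Bool))
    (cup : E → EReal) (Y Z : Finset U) (hYZ : Disjoint Y Z) (e : E) :
    (∑ b : Bool, if (assocTail ep (e, b) ∉ _root_.posPart Y ∪ _root_.negPart Z ∧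
        assocHead ep (e, b) ∈ _root_.posPart Y ∪ _root_.negPart Z) then cup e else 0)
    = if BFip (bdOf ep) e Y Z < 0
      then (((-BFip (bdOf ep) e Y Z : ℤ) : ℝ) : EReal) * cup e else 0 := by
  have hd : ∀ u, u ∈ Y → u ∉ Z := fun u hu => Finset.disjoint_left.mp hYZ hu
  rcases hep : ep e with ⟨⟨i, si⟩, ⟨j, sj⟩⟩
  rw [Fintype.sum_bool]
  simp only [assocTail, assocHead, hep, BFip_eq, mem_SYZ]
  cases si <;> cases sj <;>
    by_cases hiY : i ∈ Y <;> by_cases hiZ : i ∈ Z <;>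
    by_cases hjY : j ∈ Y <;> by_cases hjZ : j ∈ Z <;>
    simp_all [sgn] <;> norm_num [er_two_mul]

lemma cutEq [Fintype U] [DecidableEq U] [Fintype E]
    (ep : E → (U × Bool) × (U × Bool)) (clow cup : E → EReal)
    (hcup : ∀ e, cup e ≠ ⊥) (Y Z : Finset U) (hYZ : Disjoint Y Z) :
    SFCut (assocTail ep) (assocHead ep) (fun a => clow a.1) (fun a => cup a.1)
      (_root_.posPart Y ∪ _root_.negPart Z) = BFCut (bdOf ep) clow cup Y Z := by
  have h1 : (∑ a ∈ univ.filter (fun a => assocTail ep a ∈ _root_.posPart Y ∪ _root_.negPart Z ∧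
        assocHead ep a ∉ _root_.posPart Y ∪ _root_.negPart Z), clow a.1)
      = ∑ e : E, (if 0 < BFip (bdOf ep) e Y Z
          then (((BFip (bdOf ep) e Y Z : ℤ) : ℝ) : EReal) * clow e else 0) := by
    rw [Finset.sum_filter, Fintype.sum_prod_type]
    exact Finset.sum_congr rfl fun e _ => edge_leave ep clow Y Z hYZ e
  have h2 : (∑ a ∈ univ.filter (fun a => assocTail ep a ∉ _root_.posPart Y ∪ _root_.negPart Z ∧
        assocHead ep a ∈ _root_.posPart Y ∪ _root_.negPart Z), cup a.1)
      = ∑ e : E, (if BFip (bdOf ep) e Y Z < 0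
          then (((-BFip (bdOf ep) e Y Z : ℤ) : ℝ) : EReal) * cup e else 0) := by
    rw [Finset.sum_filter, Fintype.sum_prod_type]
    exact Finset.sum_congr rfl fun e _ => edge_enter ep cup Y Z hYZ e
  rw [SFCut, h1, h2, BFCut, ← Finset.sum_filter, ← Finset.sum_filter, sub_eq_add_neg]
  congr 1
  rw [er_neg_sum]
  · apply Finset.sum_congr rfl
    intro e he
    push_cast
    rw [EReal.neg_mul, neg_neg]
  · intro e he
    have h : BFip (bdOf ep) e Y Z < 0 := (Finset.mem_filter.mp he).2
    apply er_pos_mul_ne_bot _ (hcup e)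
    have : (0:ℤ) < -BFip (bdOf ep) e Y Z := by omega
    exact_mod_cast this

lemma edge_red [DecidableEq U] (ep : E → (U × Bool) × (U × Bool))
    (clow cup : E → EReal) (hcap : ∀ e, clow e ≤ cup e) (X : Finset (U × Bool)) (e : E) :
    ((∑ b : Bool, if (assocTail ep (e, b) ∈ X ∧ assocHead ep (e, b) ∉ X) then clow e else 0)
      - (∑ b : Bool, if (assocTail ep (e, b) ∉ X ∧ assocHead ep (e, b) ∈ X) then cup e else 0))
    ≤ ((∑ b : Bool, if (assocTail ep (e, b) ∈ reduceSigned X ∧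
          assocHead ep (e, b) ∉ reduceSigned X) then clow e else 0)
      - (∑ b : Bool, if (assocTail ep (e, b) ∉ reduceSigned X ∧
          assocHead ep (e, b) ∈ reduceSigned X) then cup e else 0)) := by
  have hkey : clow e - cup e ≤ 0 :=
    le_trans (EReal.sub_le_sub (hcap e) (le_refl _)) (er_sub_self_nonpos _)
  rcases hep : ep e with ⟨⟨i, si⟩, ⟨j, sj⟩⟩
  rw [Fintype.sum_bool, Fintype.sum_bool, Fintype.sum_bool, Fintype.sum_bool]
  simp only [assocTail, assocHead, hep, reduceSigned, Finset.mem_filter]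
  cases si <;> cases sj <;>
    by_cases hA : (i, true) ∈ X <;> by_cases hA' : (i, false) ∈ X <;>
    by_cases hB : (j, true) ∈ X <;> by_cases hB' : (j, false) ∈ X <;>
    simp_all

lemma cut_red [Fintype U] [DecidableEq U] [Fintype E]
    (ep : E → (U × Bool) × (U × Bool)) (clow cup : E → EReal)
    (hcup : ∀ e, cup e ≠ ⊥) (hcap : ∀ e, clow e ≤ cup e) (X : Finset (U × Bool)) :
    SFCut (assocTail ep) (assocHead ep) (fun a => clow a.1) (fun a => cup a.1) X
      ≤ SFCut (assocTail ep) (assocHead ep) (fun a => clow a.1) (fun a => cup a.1)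
        (reduceSigned X) := by
  have key : ∀ W : Finset (U × Bool),
      SFCut (assocTail ep) (assocHead ep) (fun a => clow a.1) (fun a => cup a.1) W
      = ∑ e : E, ((∑ b : Bool, if (assocTail ep (e, b) ∈ W ∧ assocHead ep (e, b) ∉ W)
            then clow e else 0)
          - (∑ b : Bool, if (assocTail ep (e, b) ∉ W ∧ assocHead ep (e, b) ∈ W)
            then cup e else 0)) := by
    intro W
    rw [SFCut, Finset.sum_filter, Finset.sum_filter, Fintype.sum_prod_type,
      Fintype.sum_prod_type, er_sum_sub]
    intro e _
    apply er_sum_ne_bot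
    intro b _
    split_ifs with h
    · exact hcup e
    · simp
  rw [key, key]
  exact Finset.sum_le_sum fun e _ => edge_red ep clow cup hcap X e

lemma reduce_decomp [Fintype U] [DecidableEq U] (X : Finset (U × Bool)) :
    ∃ Y Z : Finset U, Disjoint Y Z ∧
      reduceSigned X = _root_.posPart Y ∪ _root_.negPart Z := by
  refine ⟨univ.filter (fun i => (i, true) ∈ X ∧ (i, false) ∉ X),
    univ.filter (fun i => (i, false) ∈ X ∧ (i, true) ∉ X), ?_, ?_⟩
  · rw [Finset.disjoint_left]
    intro a ha hb
    simp only [Finset.mem_filter] at ha hb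
    tauto
  · ext ⟨u, b⟩
    cases b <;>
      simp [reduceSigned, _root_.posPart, _root_.negPart, Finset.mem_filter] <;> tauto

end Helpers

/-- **Correspondence of maximum violating cuts.**
Suppose `β` is reducible to `ρ` and the bisubmodular flow instance is infeasible.
Then `(Y,Z) ∈ 3^U` is a maximum violating cut for the bisubmodular flow instance iff
`Y⁺ ∪ Z⁻` is a maximum violating cut for the associated submodular flow instance. -/
theorem reducible_BF_max_violating_iff
    {U E : Type*} [Fintype U] [DecidableEq U] [Fintype E]
    (ep : E → (U × Bool) × (U × Bool)) (hloops : NoBadLoops ep)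
    (clow cup : E → EReal) (β : Finset U → Finset U → EReal)
    (ρ : Finset (U × Bool) → EReal)
    (hclow : ∀ e, clow e ≠ ⊤) (hcup : ∀ e, cup e ≠ ⊥) (hcap : ∀ e, clow e ≤ cup e)
    (hρsub : Submodular ρ) (hρbot : ∀ X, ρ X ≠ ⊥) (hρmono : TMono ρ)
    (hρuniv : ρ univ = 0)
    (hclosed : ∀ x : U × Bool → ℝ, InBase ρ x → InBase ρ (Psi (Phi x)))
    (hβρ : ∀ Y Z : Finset U, Disjoint Y Z → β Y Z = ρ (posPart Y ∪ negPart Z))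
    (hinfeas : ¬ ∃ ψ : E → ℝ, BFFeasible (bdOf ep) clow cup β ψ) :
    ∀ Y Z : Finset U, Disjoint Y Z →
      (BFMaxViolating (bdOf ep) clow cup β Y Z ↔
        SFMaxViolating (assocTail ep) (assocHead ep)
          (fun a => clow a.1) (fun a => cup a.1) ρ (posPart Y ∪ negPart Z)) := by
  intro Y Z hYZ
  have hcut := cutEq ep clow cup hcup Y Z hYZ
  have hβ := hβρ Y Z hYZ
  constructor
  · rintro ⟨⟨_, hviol⟩, hmax⟩
    constructor
    · show ρ (posPart Y ∪ negPart Z) < _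
      rw [hcut, ← hβ]
      exact hviol
    · intro X' hX'
      obtain ⟨Y', Z', hd', hXr⟩ := reduce_decomp X'
      have hred := cut_red ep clow cup hcup hcap X'
      rw [hXr] at hred
      have hmono := hρmono X'
      rw [hXr] at hmono
      have hcut' := cutEq ep clow cup hcup Y' Z' hd'
      have hβ' := hβρ Y' Z' hd'
      have hX'v : ρ X' < SFCut (assocTail ep) (assocHead ep)
          (fun a => clow a.1) (fun a => cup a.1) X' := hX'
      have hviol' : BFViolating (bdOf ep) clow cup β Y' Z' := by
        refine ⟨hd', ?_⟩
        rw [hβ', ← hcut']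
        exact lt_of_le_of_lt hmono (lt_of_lt_of_le hX'v hred)
      have h2 := hmax Y' Z' hviol'
      calc SFCut (assocTail ep) (assocHead ep) (fun a => clow a.1) (fun a => cup a.1) X'
            - ρ X'
          ≤ SFCut (assocTail ep) (assocHead ep) (fun a => clow a.1) (fun a => cup a.1)
              (posPart Y' ∪ negPart Z') - ρ (posPart Y' ∪ negPart Z') :=
            EReal.sub_le_sub hred hmono
        _ = BFCut (bdOf ep) clow cup Y' Z' - β Y' Z' := by rw [hcut', hβ']
        _ ≤ BFCut (bdOf ep) clow cup Y Z - β Y Z := h2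
        _ = SFCut (assocTail ep) (assocHead ep) (fun a => clow a.1) (fun a => cup a.1)
              (posPart Y ∪ negPart Z) - ρ (posPart Y ∪ negPart Z) := by rw [hcut, hβ]
  · rintro ⟨hviol, hmax⟩
    constructor
    · refine ⟨hYZ, ?_⟩
      rw [hβ, ← hcut]
      exact hviol
    · rintro Y' Z' ⟨hd', hv'⟩
      have hcut' := cutEq ep clow cup hcup Y' Z' hd'
      have hβ' := hβρ Y' Z' hd'
      have hX'v : SFViolating (assocTail ep) (assocHead ep)
          (fun a => clow a.1) (fun a => cup a.1) ρ (posPart Y' ∪ negPart Z') := by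
        show ρ (posPart Y' ∪ negPart Z') < _
        rw [hcut', ← hβ']
        exact hv'
      have h2 := hmax _ hX'v
      rw [hcut', hcut, ← hβ', ← hβ] at h2
      exact h2
end
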